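/- A path-connected subset S of Î is dense in Î if and only if for every ℓ ≥ 0 there is a flat closed arc γ ⊆ S with π_ℓ(γ) = I. Moreover, if S is dense in Î then S is metrically infinite. -/

import Mathlib

/-!
If `S` is dense, pick points of `S` on either side of the window `[c, x*]` (where `f(x*) = c`) at
level `l + 2` and a path in `S` joining them. Cut the path to a parameter interval on which the
level-`l + 2` coordinate runs from `c` to `x*` strictly inside the window. Inductively, inside
that interval every later coordinate stays strictly between its endpoint values, hence below `1`,
so the next coordinate never equals `c` there and stays on a single branch of `f`. The image is
therefore an arc projected injectively onto `[c, x*]` at level `l + 2`, and `f²` maps `[c, x*]`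
bijectively onto `I`, so the arc is `l`-flat over `I`. Conversely, arcs with `π_n(γ) = I` meet every cylinder, so `S` is dense.

Such an `l`-flat arc has length at least the variation of `f^l` on `I`, read off coordinate `0`.
Both branches of `f` have slope `±s`, so that variation is `s^l`, which is unbounded.
-/

open Set MeasureTheory ENNReal Topology

noncomputable section

namespace Tent

/-- The core interval `I = [0,1]`. -/
def I : Set ℝ := Set.Icc 0 1

/-- The core tent map of slope `s`, `f(x) = min(s·x + 2 − s, s·(1 − x))`. -/
def f (s : ℝ) (x : ℝ) : ℝ := min (s * x + 2 - s) (s * (1 - x))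

/-- The critical point `c = 1 − 1/s`. -/
def c (s : ℝ) : ℝ := 1 - 1 / s

/-- The post-critical set `PC = {c, f(c), f²(c), …}`. -/
def PC (s : ℝ) : Set ℝ := Set.range fun n => (f s)^[n] (c s)

/-- The inverse limit, as a set of sequences: `x_i ∈ I` and `f(x_{i+1}) = x_i`. -/
def IhatSet (s : ℝ) : Set (ℕ → ℝ) :=
  {x | (∀ i, x i ∈ I) ∧ ∀ i, f s (x (i + 1)) = x i}

/-- The inverse limit space `Î`. -/
abbrev Ihat (s : ℝ) : Type := ↥(IhatSet s)

/-- The metric on `Î`: `d(x,y) = Σ_i |x_i − y_i|/2^i`. -/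
def dHat (s : ℝ) (x y : Ihat s) : ℝ := ∑' i : ℕ, |x.1 i - y.1 i| / 2 ^ i

/-- The shift map on sequences: `x ↦ (f(x₀), x₀, x₁, …)`. -/
def fhatSeq (s : ℝ) (x : ℕ → ℝ) : ℕ → ℝ := fun n => Nat.casesOn n (f s (x 0)) fun k => x k

/-- The image under `f̂ⁿ` of a subset of `Î`. -/
def fhatImage (s : ℝ) (n : ℕ) (K : Set (Ihat s)) : Set (Ihat s) :=
  {y : Ihat s | ∃ x ∈ K, y.1 = (fhatSeq s)^[n] (Subtype.val x)}

/-- The inverse `f̂⁻ⁿ` of the shift homeomorphism: drop the first `n` coordinates. -/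
def fhatInv (s : ℝ) (n : ℕ) (x : Ihat s) : Ihat s :=
  ⟨fun i => x.1 (i + n), fun i => x.2.1 (i + n), fun i => by
    show f s (x.1 (i + 1 + n)) = x.1 (i + n)
    rw [show i + 1 + n = i + n + 1 from by omega]
    exact x.2.2 (i + n)⟩

/-- `γ` is an arc in `Î`: homeomorphic to a nontrivial interval of `ℝ`. -/
def IsArc (s : ℝ) (γ : Set (Ihat s)) : Prop :=
  ∃ J : Set ℝ, J.OrdConnected ∧ J.Nontrivial ∧ Nonempty (γ ≃ₜ J)

/-- `γ` is a closed arc in `Î`: homeomorphic to `[0,1]`. -/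
def IsClosedArc (s : ℝ) (γ : Set (Ihat s)) : Prop := Nonempty (γ ≃ₜ (Set.Icc (0:ℝ) 1))

/-- `γ` is an open arc in `Î`: homeomorphic to `(0,1)`. -/
def IsOpenArc (s : ℝ) (γ : Set (Ihat s)) : Prop := Nonempty (γ ≃ₜ (Set.Ioo (0:ℝ) 1))

/-- `x` is an endpoint of the closed arc `γ`. -/
def IsEndpoint (s : ℝ) (x : Ihat s) (γ : Set (Ihat s)) : Prop :=
  ∃ (e : γ ≃ₜ (Set.Icc (0:ℝ) 1)) (hx : x ∈ γ), (e ⟨x, hx⟩).1 = 0 ∨ (e ⟨x, hx⟩).1 = 1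

/-- `γ` is `m`-flat over the nontrivial interval `J ⊆ I`: the projection `π_m`
restricted to `γ` is a homeomorphism onto `J`. -/
def MFlatOver (s : ℝ) (m : ℕ) (γ : Set (Ihat s)) (J : Set ℝ) : Prop :=
  J ⊆ I ∧ J.OrdConnected ∧ J.Nontrivial ∧
    ∃ e : γ ≃ₜ J, ∀ x : γ, (e x).1 = x.1.1 m

/-- `γ` is an `m`-flat arc. -/
def IsMFlat (s : ℝ) (m : ℕ) (γ : Set (Ihat s)) : Prop := ∃ J : Set ℝ, MFlatOver s m γ J

/-- `γ` is a flat arc: `m`-flat for some `m ≥ 0`. -/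
def IsFlat (s : ℝ) (γ : Set (Ihat s)) : Prop := ∃ m : ℕ, IsMFlat s m γ

/-- `γ` is a flat closed arc. -/
def IsFlatClosedArc (s : ℝ) (γ : Set (Ihat s)) : Prop := IsClosedArc s γ ∧ IsFlat s γ

/-- `p 0, …, p k` occur in order along the closed arc `γ` (from one endpoint to the other). -/
def InOrderAlong (s : ℝ) (γ : Set (Ihat s)) (k : ℕ) (p : ℕ → Ihat s) : Prop :=
  ∃ (e : γ ≃ₜ (Set.Icc (0:ℝ) 1)) (t : ℕ → Set.Icc (0:ℝ) 1),
    (∀ i j, i ≤ j → j ≤ k → t i ≤ t j) ∧ ∀ i ≤ k, (e.symm (t i)).1 = p i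

/-- The arclength of a closed arc `γ` in the metric `d`: the supremum over finite
sequences of points occurring in order along `γ` of the sums of successive distances. -/
def arcLength (s : ℝ) (γ : Set (Ihat s)) : ℝ≥0∞ :=
  ⨆ (k : ℕ) (p : ℕ → Ihat s) (_ : InOrderAlong s γ k p),
    ENNReal.ofReal (∑ i ∈ Finset.range k, dHat s (p i) (p (i + 1)))

/-- A continuum: a compact connected subset of `Î` with more than one point. -/
def IsContinuum (s : ℝ) (K : Set (Ihat s)) : Prop :=
  IsCompact K ∧ IsConnected K ∧ K.Nontrivial

/-- `K` is `ε`-dense in `Î`. -/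
def EpsDense (s : ℝ) (ε : ℝ) (K : Set (Ihat s)) : Prop :=
  ∀ x : Ihat s, ∃ y ∈ K, dHat s x y ≤ ε

/-- `S` is metrically infinite: contains flat closed arcs of arbitrarily large length. -/
def MetricallyInfinite (s : ℝ) (S : Set (Ihat s)) : Prop :=
  ∀ N : ℝ, 0 < N → ∃ γ : Set (Ihat s), γ ⊆ S ∧ IsFlatClosedArc s γ ∧
    ENNReal.ofReal N < arcLength s γ

/-- An arc is bi-dense if, for some point `p` in it, both connected components of
`γ ∖ {p}` are dense in `Î`. -/
def BiDense (s : ℝ) (γ : Set (Ihat s)) : Prop :=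
  ∃ p ∈ γ, ∀ q ∈ γ \ {p}, Dense (connectedComponentIn (γ \ {p}) q)

/-- An arc is metrically bi-infinite if, for some point `p` in it, both connected
components of `γ ∖ {p}` are metrically infinite. -/
def MetricallyBiInfinite (s : ℝ) (γ : Set (Ihat s)) : Prop :=
  ∃ p ∈ γ, ∀ q ∈ γ \ {p}, MetricallyInfinite s (connectedComponentIn (γ \ {p}) q)

/-- `x` is globally leaf regular: its path component is a bi-dense, metrically
bi-infinite open arc. -/
def GloballyLeafRegular (s : ℝ) (x : Ihat s) : Prop :=
  IsOpenArc s (pathComponent x) ∧ BiDense s (pathComponent x) ∧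
    MetricallyBiInfinite s (pathComponent x)

/-- A `0`-box over `J`: a union of arcs, each `0`-flat over `J`. -/
def ZeroBoxOver (s : ℝ) (B : Set (Ihat s)) (J : Set ℝ) : Prop :=
  ∃ A : Set (Set (Ihat s)), (∀ γ ∈ A, MFlatOver s 0 γ J) ∧ B = ⋃₀ A

/-- An `m`-box over `J`: `f̂⁻ᵐ(B)` is a `0`-box over `J`. -/
def MBoxOver (s : ℝ) (m : ℕ) (B : Set (Ihat s)) (J : Set ℝ) : Prop :=
  ZeroBoxOver s (fhatInv s m '' B) J

/-- The maximal `m`-box over `J`: the union of all arcs `m`-flat over `J`. -/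
def maximalMBox (s : ℝ) (m : ℕ) (J : Set ℝ) : Set (Ihat s) :=
  ⋃₀ {γ : Set (Ihat s) | MFlatOver s m γ J}

/-- The point cylinder `[y₀, …, y_n]`. -/
def pointCyl (s : ℝ) (y : ℕ → ℝ) (n : ℕ) : Set (Ihat s) :=
  {z : Ihat s | ∀ i ≤ n, z.1 i = y i}

theorem _root_.StrictMonoOn.mem_uIoo_iff {α β : Type*} [LinearOrder α] [LinearOrder β]
    {φ : α → β} {D : Set α} (hφ : StrictMonoOn φ D) {x y z : α} (hx : x ∈ D) (hy : y ∈ D)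
    (hz : z ∈ D) : φ z ∈ uIoo (φ x) (φ y) ↔ z ∈ uIoo x y := by
  rcases le_total x y with h | h
  · rw [uIoo_of_le h, uIoo_of_le (hφ.monotoneOn hx hy h), mem_Ioo, mem_Ioo,
      hφ.lt_iff_lt hx hz, hφ.lt_iff_lt hz hy]
  · rw [uIoo_of_ge h, uIoo_of_ge (hφ.monotoneOn hy hx h), mem_Ioo, mem_Ioo,
      hφ.lt_iff_lt hy hz, hφ.lt_iff_lt hz hx]

theorem _root_.StrictAntiOn.mem_uIoo_iff {α β : Type*} [LinearOrder α] [LinearOrder β]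
    {φ : α → β} {D : Set α} (hφ : StrictAntiOn φ D) {x y z : α} (hx : x ∈ D) (hy : y ∈ D)
    (hz : z ∈ D) : φ z ∈ uIoo (φ x) (φ y) ↔ z ∈ uIoo x y := by
  rcases le_total x y with h | h
  · rw [uIoo_of_le h, uIoo_of_ge (hφ.antitoneOn hx hy h), mem_Ioo, mem_Ioo,
      hφ.lt_iff_gt hy hz, hφ.lt_iff_gt hz hx, and_comm]
  · rw [uIoo_of_ge h, uIoo_of_le (hφ.antitoneOn hy hx h), mem_Ioo, mem_Ioo,
      hφ.lt_iff_gt hx hz, hφ.lt_iff_gt hz hy, and_comm]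

theorem _root_.ContinuousOn.mapsTo_Iic_or_Ici_of_ne {g : ℝ → ℝ} {a b y : ℝ}
    (hg : ContinuousOn g (Icc a b)) (hy : ∀ t ∈ Ioo a b, g t ≠ y) :
    MapsTo g (Icc a b) (Iic y) ∨ MapsTo g (Icc a b) (Ici y) := by
  by_contra h
  simp only [MapsTo, not_or, not_forall, mem_Iic, mem_Ici, not_le] at h
  obtain ⟨⟨t, ht, hgt⟩, ⟨t', ht', hgt'⟩⟩ := h
  rcases le_total t t' with h | h
  · obtain ⟨u, hu, hgu⟩ :=
      intermediate_value_Ioo' h (hg.mono (Icc_subset_Icc ht.1 ht'.2)) ⟨hgt', hgt⟩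
    exact hy u ⟨ht.1.trans_lt hu.1, hu.2.trans_le ht'.2⟩ hgu
  · obtain ⟨u, hu, hgu⟩ :=
      intermediate_value_Ioo h (hg.mono (Icc_subset_Icc ht'.1 ht.2)) ⟨hgt', hgt⟩
    exact hy u ⟨ht'.1.trans_lt hu.1, hu.2.trans_le ht.2⟩ hgu

/-- `t₁` is the first time `g` reaches `β` and `t₀` the last time before `t₁` that `g` equals `α`;
in between `g` avoids both values. -/
theorem _root_.ContinuousOn.exists_Icc_crossing {g : ℝ → ℝ} {a b α β : ℝ}
    (hg : ContinuousOn g (Icc a b)) (hab : a ≤ b) (ha : g a ≤ α) (hαβ : α < β) (hb : β ≤ g b) :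
    ∃ t₀ t₁, a ≤ t₀ ∧ t₀ < t₁ ∧ t₁ ≤ b ∧ g t₀ = α ∧ g t₁ = β ∧
      MapsTo g (Icc t₀ t₁) (Icc α β) ∧ MapsTo g (Ioo t₀ t₁) (Ioo α β) := by
  set T₁ := Icc a b ∩ g ⁻¹' {β}
  have hT₁ : IsClosed T₁ := hg.preimage_isClosed_of_isClosed isClosed_Icc isClosed_singleton
  have hT₁ne : T₁.Nonempty := intermediate_value_Icc hab hg ⟨ha.trans hαβ.le, hb⟩
  have hT₁bdd : BddBelow T₁ := ⟨a, fun t ht => ht.1.1⟩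
  obtain ⟨⟨hat₁, ht₁b⟩, hgt₁⟩ : sInf T₁ ∈ T₁ := hT₁.csInf_mem hT₁ne hT₁bdd
  set t₁ := sInf T₁
  set T₀ := Icc a t₁ ∩ g ⁻¹' {α}
  have hT₀ : IsClosed T₀ := (hg.mono (Icc_subset_Icc_right ht₁b)).preimage_isClosed_of_isClosed
    isClosed_Icc isClosed_singleton
  have hT₀ne : T₀.Nonempty := intermediate_value_Icc hat₁ (hg.mono (Icc_subset_Icc_right ht₁b))
    ⟨ha, (hαβ.le.trans_eq hgt₁.symm)⟩
  have hT₀bdd : BddAbove T₀ := ⟨t₁, fun t ht => ht.1.2⟩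
  obtain ⟨⟨hat₀, ht₀t₁⟩, hgt₀⟩ : sSup T₀ ∈ T₀ := hT₀.csSup_mem hT₀ne hT₀bdd
  set t₀ := sSup T₀
  have hlt : t₀ < t₁ := ht₀t₁.lt_of_ne fun h => hαβ.ne <| by
    rw [← (hgt₀ : g t₀ = α), ← (hgt₁ : g t₁ = β), h]
  have hcont : ContinuousOn g (Icc t₀ t₁) := hg.mono (Icc_subset_Icc hat₀ ht₁b)
  have hneα : ∀ t ∈ Ioo t₀ t₁, g t ≠ α := fun t ht h =>
    (le_csSup hT₀bdd ⟨⟨hat₀.trans ht.1.le, ht.2.le⟩, h⟩).not_gt ht.1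
  have hneβ : ∀ t ∈ Ioo t₀ t₁, g t ≠ β := fun t ht h =>
    (csInf_le hT₁bdd ⟨⟨hat₀.trans ht.1.le, ht.2.le.trans ht₁b⟩, h⟩).not_gt ht.2
  have hgeα : MapsTo g (Icc t₀ t₁) (Ici α) :=
    (hcont.mapsTo_Iic_or_Ici_of_ne hneα).resolve_left fun h =>
      (h ⟨hlt.le, le_rfl⟩).not_gt (hαβ.trans_eq (hgt₁ : g t₁ = β).symm)
  have hleβ : MapsTo g (Icc t₀ t₁) (Iic β) :=
    (hcont.mapsTo_Iic_or_Ici_of_ne hneβ).resolve_right fun h =>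
      (h ⟨le_rfl, hlt.le⟩).not_gt ((hgt₀ : g t₀ = α).trans_lt hαβ)
  refine ⟨t₀, t₁, hat₀, hlt, ht₁b, hgt₀, hgt₁, fun t ht => ⟨hgeα ht, hleβ ht⟩, fun t ht => ?_⟩
  have ht' := Ioo_subset_Icc_self ht
  exact ⟨(hgeα ht').lt_of_ne' (hneα t ht), (hleβ ht').lt_of_ne (hneβ t ht)⟩

section TentMap

variable {s : ℝ}

lemma c_pos (hs : 1 < s) : 0 < c s := by
  have : 1 / s < 1 := (div_lt_one (by linarith)).2 hs
  unfold c; linarith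

lemma c_lt_one (hs : 0 < s) : c s < 1 := by
  have : 0 < 1 / s := by positivity
  unfold c; linarith

lemma s_mul_c (hs : 0 < s) : s * c s = s - 1 := by
  unfold c; field_simp

lemma f_of_le_c (hs : 0 < s) {x : ℝ} (hx : x ≤ c s) : f s x = s * x + 2 - s := by
  have := mul_le_mul_of_nonneg_left hx hs.le
  rw [s_mul_c hs] at this
  exact min_eq_left (by linarith)

lemma f_of_c_le (hs : 0 < s) {x : ℝ} (hx : c s ≤ x) : f s x = s * (1 - x) := by
  have := mul_le_mul_of_nonneg_left hx hs.le
  rw [s_mul_c hs] at this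
  exact min_eq_right (by linarith)

lemma f_c (hs : 0 < s) : f s (c s) = 1 := by
  rw [f_of_c_le hs le_rfl, mul_sub, s_mul_c hs]; ring

lemma f_one (hs : 0 < s) : f s 1 = 0 := by
  rw [f_of_c_le hs (c_lt_one hs).le]; ring

lemma continuous_f : Continuous (f s) := by
  unfold f; fun_prop

lemma f_mem_I (hs0 : 0 ≤ s) (hs2 : s ≤ 2) {x : ℝ} (hx : x ∈ I) : f s x ∈ I := by
  obtain ⟨hx0, hx1⟩ := hx
  refine ⟨le_min (by nlinarith) (by nlinarith), ?_⟩
  by_contra h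
  obtain ⟨h₁, h₂⟩ := lt_min_iff.1 (not_le.1 h)
  linarith

lemma strictMonoOn_f (hs : 0 < s) : StrictMonoOn (f s) (Iic (c s)) := fun x hx y hy hxy => by
  rw [f_of_le_c hs hx, f_of_le_c hs hy]; nlinarith

lemma strictAntiOn_f (hs : 0 < s) : StrictAntiOn (f s) (Ici (c s)) := fun x hx y hy hxy => by
  rw [f_of_c_le hs hx, f_of_c_le hs hy]; nlinarith

def xStar (s : ℝ) : ℝ := 1 - c s / s

lemma c_lt_xStar (hs : 0 < s) : c s < xStar s := by
  have h : xStar s - c s = 1 / s ^ 2 := by unfold xStar c; field_simp; ring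
  have : 0 < 1 / s ^ 2 := by positivity
  linarith

lemma xStar_lt_one (hs : 1 < s) : xStar s < 1 := by
  have : 0 < c s / s := div_pos (c_pos hs) (by linarith)
  unfold xStar; linarith

lemma f_xStar (hs : 0 < s) : f s (xStar s) = c s := by
  rw [f_of_c_le hs (c_lt_xStar hs).le]; unfold xStar; field_simp; ring

lemma bijOn_f_of_c_le (hs : 0 < s) {a b : ℝ} (hca : c s ≤ a) (hab : a ≤ b) :
    BijOn (f s) (Icc a b) (Icc (f s b) (f s a)) := by
  have hanti := (strictAntiOn_f hs).mono ((Icc_subset_Ici_iff hab).2 hca)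
  rw [← continuous_f.continuousOn.image_Icc_of_antitoneOn hab hanti.antitoneOn]
  exact hanti.injOn.bijOn_image

lemma bijOn_f_iterate_two (hs : 0 < s) : BijOn (f s)^[2] (Icc (c s) (xStar s)) I := by
  have h₁ := bijOn_f_of_c_le hs le_rfl (c_lt_xStar hs).le
  have h₂ := bijOn_f_of_c_le hs le_rfl (c_lt_one hs).le
  rw [f_xStar hs, f_c hs] at h₁
  rw [f_one hs, f_c hs] at h₂
  exact h₂.comp h₁

def fInvRight (s y : ℝ) : ℝ := 1 - y / s

lemma fInvRight_mem_I (hs : 1 ≤ s) {y : ℝ} (hy : y ∈ I) : fInvRight s y ∈ I := by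
  have h₀ : 0 ≤ y / s := div_nonneg hy.1 (by linarith)
  have h₁ : y / s ≤ 1 := (div_le_one (by linarith)).2 (hy.2.trans hs)
  unfold fInvRight
  exact ⟨by linarith, by linarith⟩

lemma f_fInvRight (hs : 0 < s) {y : ℝ} (hy : y ∈ I) : f s (fInvRight s y) = y := by
  have : y / s ≤ 1 / s := div_le_div_of_nonneg_right hy.2 hs.le
  rw [f_of_c_le hs (by unfold fInvRight c; linarith)]
  unfold fInvRight; field_simp; ring

lemma eVariationOn_comp_f_of_le_c (hs : 0 < s) (g : ℝ → ℝ) {a b : ℝ} (hab : a ≤ b)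
    (hb : b ≤ c s) : eVariationOn (g ∘ f s) (Icc a b) = eVariationOn g (Icc (f s a) (f s b)) := by
  have hmono := ((strictMonoOn_f hs).mono ((Icc_subset_Iic_iff hab).2 hb)).monotoneOn
  rw [eVariationOn.comp_eq_of_monotoneOn g _ hmono,
    continuous_f.continuousOn.image_Icc_of_monotoneOn hab hmono]

lemma eVariationOn_comp_f_of_c_le (hs : 0 < s) (g : ℝ → ℝ) {a b : ℝ} (hab : a ≤ b)
    (ha : c s ≤ a) : eVariationOn (g ∘ f s) (Icc a b) = eVariationOn g (Icc (f s b) (f s a)) := by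
  have hanti := ((strictAntiOn_f hs).mono ((Icc_subset_Ici_iff hab).2 ha)).antitoneOn
  rw [eVariationOn.comp_eq_of_antitoneOn g _ hanti,
    continuous_f.continuousOn.image_Icc_of_antitoneOn hab hanti]

lemma eVariationOn_comp_f (hs : 0 < s) (hs2 : s ≤ 2) {g : ℝ → ℝ} {K : ℝ} (hK : 0 ≤ K)
    (hg : ∀ a b, 0 ≤ a → a ≤ b → b ≤ 1 → eVariationOn g (Icc a b) = .ofReal (K * (b - a)))
    {a b : ℝ} (ha : 0 ≤ a) (hab : a ≤ b) (hb : b ≤ 1) :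
    eVariationOn (g ∘ f s) (Icc a b) = .ofReal (s * K * (b - a)) := by
  have hfI : ∀ x, 0 ≤ x → x ≤ 1 → 0 ≤ f s x ∧ f s x ≤ 1 := fun x h₀ h₁ =>
    f_mem_I hs.le hs2 ⟨h₀, h₁⟩
  have one_side : ∀ x y, 0 ≤ x → x ≤ y → y ≤ 1 → y ≤ c s ∨ c s ≤ x →
      eVariationOn (g ∘ f s) (Icc x y) = .ofReal (s * K * (y - x)) := by
    rintro x y hx hxy hy (hyc | hcx)
    · rw [eVariationOn_comp_f_of_le_c hs g hxy hyc,
        hg _ _ (hfI x hx (hxy.trans hy)).1 ((strictMonoOn_f hs).monotoneOn (hxy.trans hyc) hyc hxy)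
          (hfI y (hx.trans hxy) hy).2, f_of_le_c hs (hxy.trans hyc), f_of_le_c hs hyc]
      ring_nf
    · rw [eVariationOn_comp_f_of_c_le hs g hxy hcx,
        hg _ _ (hfI y (hx.trans hxy) hy).1 ((strictAntiOn_f hs).antitoneOn hcx (hcx.trans hxy) hxy)
          (hfI x hx (hxy.trans hy)).2, f_of_c_le hs hcx, f_of_c_le hs (hcx.trans hxy)]
      ring_nf
  rcases le_total b (c s) with hbc | hcb
  · exact one_side a b ha hab hb (.inl hbc)
  rcases le_total (c s) a with hca | hac
  · exact one_side a b ha hab hb (.inr hca)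
  have hsplit := eVariationOn.Icc_add_Icc (g ∘ f s) hac hcb (mem_univ (c s))
  simp only [univ_inter] at hsplit
  have hc1 := (c_lt_one hs).le
  rw [← hsplit, one_side a (c s) ha hac hc1 (.inl le_rfl),
    one_side (c s) b (ha.trans hac) hcb hb (.inr le_rfl), ← ENNReal.ofReal_add
    (mul_nonneg (mul_nonneg hs.le hK) (sub_nonneg.2 hac))
    (mul_nonneg (mul_nonneg hs.le hK) (sub_nonneg.2 hcb))]
  ring_nf

theorem eVariationOn_iterate_f (hs : 0 < s) (hs2 : s ≤ 2) (m : ℕ) {a b : ℝ} (ha : 0 ≤ a)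
    (hab : a ≤ b) (hb : b ≤ 1) :
    eVariationOn (f s)^[m] (Icc a b) = .ofReal (s ^ m * (b - a)) := by
  induction m generalizing a b with
  | zero => simp
  | succ m ih =>
    rw [Function.iterate_succ, eVariationOn_comp_f hs hs2 (by positivity) (fun a b => ih) ha hab hb,
      pow_succ, mul_comm (s ^ m)]

end TentMap

section InverseLimit

variable {s : ℝ}

lemma coord_mem (z : Ihat s) (i : ℕ) : z.1 i ∈ I := z.2.1 i

lemma f_coord_succ (z : Ihat s) (i : ℕ) : f s (z.1 (i + 1)) = z.1 i := z.2.2 i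

lemma coord_eq_iterate (z : Ihat s) (i k : ℕ) : z.1 i = (f s)^[k] (z.1 (i + k)) := by
  induction k with
  | zero => rfl
  | succ k ih => rw [ih, ← add_assoc, ← f_coord_succ z (i + k), Function.iterate_succ_apply]

lemma coord_eq_of_coord_eq {z w : Ihat s} {n i : ℕ} (h : z.1 n = w.1 n) (hi : i ≤ n) :
    z.1 i = w.1 i := by
  rw [coord_eq_iterate z i (n - i), coord_eq_iterate w i (n - i), Nat.add_sub_cancel' hi, h]

lemma eq_of_forall_coord_add_eq {z w : Ihat s} {k : ℕ} (h : ∀ j, z.1 (k + j) = w.1 (k + j)) :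
    z = w :=
  Subtype.ext <| funext fun i => by
    rw [coord_eq_iterate z i k, coord_eq_iterate w i k, add_comm, h]

lemma continuous_coord (n : ℕ) : Continuous fun z : Ihat s => z.1 n :=
  (continuous_apply n).comp continuous_subtype_val

lemma exists_coord_eq (hs1 : 1 ≤ s) (hs2 : s ≤ 2) (n : ℕ) {v : ℝ} (hv : v ∈ I) :
    ∃ z : Ihat s, z.1 n = v := by
  have hf : MapsTo (f s) I I := fun x hx => f_mem_I (by linarith) hs2 hx
  have hg : MapsTo (fInvRight s) I I := fun y hy => fInvRight_mem_I hs1 hy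
  refine ⟨⟨fun i => (f s)^[n - i] ((fInvRight s)^[i - n] v),
    fun i => hf.iterate _ (hg.iterate _ hv), fun i => ?_⟩, by simp⟩
  show f s ((f s)^[n - (i + 1)] ((fInvRight s)^[i + 1 - n] v)) =
    (f s)^[n - i] ((fInvRight s)^[i - n] v)
  rcases lt_or_ge i n with hi | hi
  · rw [Nat.sub_eq_zero_of_le hi, Nat.sub_eq_zero_of_le hi.le,
      show n - i = n - (i + 1) + 1 by omega, Function.iterate_succ_apply']
  · rw [Nat.sub_eq_zero_of_le (by omega : n ≤ i + 1), Nat.sub_eq_zero_of_le hi,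
      show i + 1 - n = i - n + 1 by omega, Function.iterate_succ_apply']
    exact f_fInvRight (by linarith) (hg.iterate _ hv)

lemma exists_forall_coord_eq_mem {U : Set (Ihat s)} (hU : IsOpen U) {z : Ihat s} (hz : z ∈ U) :
    ∃ n, ∀ w : Ihat s, w.1 n = z.1 n → w ∈ U := by
  obtain ⟨V, hV, rfl⟩ := isOpen_induced_iff.mp hU
  obtain ⟨F, u, hu, hFV⟩ := isOpen_pi_iff.mp hV z.1 hz
  refine ⟨F.sup id, fun w hw => hFV fun i hi => ?_⟩
  rw [coord_eq_of_coord_eq (i := i) hw (Finset.le_sup (f := id) hi)]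
  exact (hu i hi).2

lemma dense_of_forall_I_subset_image_coord {S : Set (Ihat s)}
    (h : ∀ n, I ⊆ (fun x : Ihat s => x.1 n) '' S) : Dense S := by
  refine dense_iff_inter_open.2 fun U hU ⟨z, hz⟩ => ?_
  obtain ⟨n, hn⟩ := exists_forall_coord_eq_mem hU hz
  obtain ⟨w, hwS, hw⟩ := h n (coord_mem z n)
  exact ⟨w, hn w hw, hwS⟩

lemma dHat_nonneg (z w : Ihat s) : 0 ≤ dHat s z w :=
  tsum_nonneg fun i => by positivity

lemma abs_coord_zero_sub_le_dHat (z w : Ihat s) : |z.1 0 - w.1 0| ≤ dHat s z w := by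
  have hsum : Summable fun i : ℕ => |z.1 i - w.1 i| / 2 ^ i := by
    refine summable_geometric_two.of_nonneg_of_le (fun i => by positivity) fun i => ?_
    have h₁ := coord_mem z i
    have h₂ := coord_mem w i
    have : |z.1 i - w.1 i| ≤ 1 :=
      abs_sub_le_iff.2 ⟨by linarith [h₁.2, h₂.1], by linarith [h₁.1, h₂.2]⟩
    rw [one_div_pow]
    gcongr
  simpa [dHat] using hsum.le_tsum 0 fun j _ => by positivity

end InverseLimit

section FlatArcs

variable {s : ℝ}

lemma MFlatOver.image_coord {m : ℕ} {γ : Set (Ihat s)} {J : Set ℝ} (h : MFlatOver s m γ J) :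
    (fun x : Ihat s => x.1 m) '' γ = J := by
  obtain ⟨-, -, -, e, he⟩ := h
  ext v
  constructor
  · rintro ⟨x, hx, rfl⟩
    have := (e ⟨x, hx⟩).2
    rwa [he] at this
  · intro hv
    refine ⟨(e.symm ⟨v, hv⟩).1, (e.symm ⟨v, hv⟩).2, ?_⟩
    simp [← he]

lemma MFlatOver.isFlatClosedArc {m : ℕ} {γ : Set (Ihat s)} (h : MFlatOver s m γ I) :
    IsFlatClosedArc s γ :=
  ⟨⟨h.2.2.2.choose⟩, m, I, h⟩

lemma mflatOver_of_bijOn {m : ℕ} {γ : Set (Ihat s)} {J : Set ℝ} (hγ : IsCompact γ)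
    (h : BijOn (fun z : Ihat s => z.1 m) γ J) (hJI : J ⊆ I) (hJ : J.OrdConnected)
    (hJn : J.Nontrivial) : MFlatOver s m γ J := by
  have : CompactSpace γ := isCompact_iff_compactSpace.mp hγ
  refine ⟨hJI, hJ, hJn, Continuous.homeoOfEquivCompactToT2 (f := h.equiv _) ?_, fun _ => rfl⟩
  exact ((continuous_coord m).comp continuous_subtype_val).subtype_mk _

theorem eVariationOn_iterate_le_arcLength {l : ℕ} {γ : Set (Ihat s)} (h : MFlatOver s l γ I) :
    eVariationOn (f s)^[l] I ≤ arcLength s γ := by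
  obtain ⟨-, -, -, e, he⟩ := h
  refine iSup_le fun ⟨k, u, hu, huI⟩ => ?_
  let p : ℕ → Ihat s := fun i => (e.symm ⟨u i, huI i⟩).1
  have hp : ∀ i, (p i).1 0 = (f s)^[l] (u i) := fun i => by
    rw [coord_eq_iterate (p i) 0 l, zero_add, ← he, e.apply_symm_apply]
  have hord : InOrderAlong s γ k p :=
    ⟨e, fun i => ⟨u i, huI i⟩, fun i j hij _ => hu hij, fun i _ => rfl⟩
  calc ∑ i ∈ Finset.range k, edist ((f s)^[l] (u (i + 1))) ((f s)^[l] (u i))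
      ≤ ∑ i ∈ Finset.range k, ENNReal.ofReal (dHat s (p i) (p (i + 1))) := by
        gcongr with i
        rw [edist_dist, Real.dist_eq, ← hp, ← hp, abs_sub_comm]
        exact ENNReal.ofReal_le_ofReal (abs_coord_zero_sub_le_dHat _ _)
    _ = ENNReal.ofReal (∑ i ∈ Finset.range k, dHat s (p i) (p (i + 1))) :=
        (ENNReal.ofReal_sum_of_nonneg fun i _ => dHat_nonneg _ _).symm
    _ ≤ arcLength s γ := le_iSup₂_of_le k p (le_iSup_of_le hord le_rfl)

end FlatArcs

section Crossing

variable {s : ℝ} {F : ℝ → Ihat s} {t₀ t₁ : ℝ}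

lemma coord_succ_mapsTo_Iic_or_Ici (hs : 0 < s) (hF : Continuous F) {n : ℕ}
    (hn : MapsTo (fun t => (F t).1 n) (Ioo t₀ t₁) (uIoo ((F t₀).1 n) ((F t₁).1 n))) :
    MapsTo (fun t => (F t).1 (n + 1)) (Icc t₀ t₁) (Iic (c s)) ∨
      MapsTo (fun t => (F t).1 (n + 1)) (Icc t₀ t₁) (Ici (c s)) := by
  refine ((continuous_coord (n + 1)).comp hF).continuousOn.mapsTo_Iic_or_Ici_of_ne
    fun t ht hc => ?_
  have hlt : (F t).1 n < (F t₀).1 n ⊔ (F t₁).1 n := (hn ht).2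
  rw [← f_coord_succ, show (F t).1 (n + 1) = c s from hc, f_c hs] at hlt
  exact hlt.not_ge (sup_le (coord_mem _ n).2 (coord_mem _ n).2)

lemma coord_succ_mapsTo_uIoo (hs : 0 < s) (hF : Continuous F) {n : ℕ}
    (hn : MapsTo (fun t => (F t).1 n) (Ioo t₀ t₁) (uIoo ((F t₀).1 n) ((F t₁).1 n))) :
    MapsTo (fun t => (F t).1 (n + 1)) (Ioo t₀ t₁)
      (uIoo ((F t₀).1 (n + 1)) ((F t₁).1 (n + 1))) := by
  intro t ht
  have key : f s ((F t).1 (n + 1)) ∈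
      uIoo (f s ((F t₀).1 (n + 1))) (f s ((F t₁).1 (n + 1))) := by
    simpa only [f_coord_succ] using hn ht
  have h₀ : t₀ ∈ Icc t₀ t₁ := left_mem_Icc.2 (ht.1.trans ht.2).le
  have h₁ : t₁ ∈ Icc t₀ t₁ := right_mem_Icc.2 (ht.1.trans ht.2).le
  rcases coord_succ_mapsTo_Iic_or_Ici hs hF hn with h | h
  · exact ((strictMonoOn_f hs).mem_uIoo_iff (h h₀) (h h₁) (h (Ioo_subset_Icc_self ht))).1 key
  · exact ((strictAntiOn_f hs).mem_uIoo_iff (h h₀) (h h₁) (h (Ioo_subset_Icc_self ht))).1 key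

lemma coord_add_mapsTo_uIoo (hs : 0 < s) (hF : Continuous F) {k : ℕ}
    (hk : MapsTo (fun t => (F t).1 k) (Ioo t₀ t₁) (uIoo ((F t₀).1 k) ((F t₁).1 k))) (j : ℕ) :
    MapsTo (fun t => (F t).1 (k + j)) (Ioo t₀ t₁) (uIoo ((F t₀).1 (k + j)) ((F t₁).1 (k + j))) := by
  induction j with
  | zero => exact hk
  | succ j ih => exact coord_succ_mapsTo_uIoo hs hF ih

lemma injOn_coord_image_Icc (hs : 0 < s) (hF : Continuous F) {k : ℕ}
    (hk : MapsTo (fun t => (F t).1 k) (Ioo t₀ t₁) (uIoo ((F t₀).1 k) ((F t₁).1 k))) :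
    InjOn (fun z : Ihat s => z.1 k) (F '' Icc t₀ t₁) := by
  rintro _ ⟨t, ht, rfl⟩ _ ⟨t', ht', rfl⟩ heq
  refine eq_of_forall_coord_add_eq (k := k) fun j => ?_
  induction j with
  | zero => exact heq
  | succ j ih =>
    have hfeq : f s ((F t).1 (k + j + 1)) = f s ((F t').1 (k + j + 1)) := by
      rw [f_coord_succ, f_coord_succ, ih]
    rcases coord_succ_mapsTo_Iic_or_Ici hs hF (coord_add_mapsTo_uIoo hs hF hk j) with h | h
    · exact (strictMonoOn_f hs).injOn (h ht) (h ht') hfeq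
    · exact (strictAntiOn_f hs).injOn (h ht) (h ht') hfeq

end Crossing

theorem exists_mflatOver_I {s : ℝ} (hs1 : 1 < s) (hs2 : s ≤ 2) {S : Set (Ihat s)} (hD : Dense S)
    (hS : IsPathConnected S) (l : ℕ) : ∃ γ ⊆ S, MFlatOver s l γ I := by
  have hs0 : 0 < s := by linarith
  have hπ := continuous_coord (s := s) (l + 2)
  obtain ⟨x, hx, hxS⟩ : ∃ x : Ihat s, x.1 (l + 2) < c s ∧ x ∈ S := by
    obtain ⟨z, hz⟩ := exists_coord_eq hs1.le hs2 (l + 2) (⟨le_rfl, zero_le_one⟩ : (0 : ℝ) ∈ I)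
    exact hD.inter_open_nonempty _ (isOpen_lt hπ continuous_const)
      ⟨z, show z.1 (l + 2) < c s by rw [hz]; exact c_pos hs1⟩
  obtain ⟨y, hy, hyS⟩ : ∃ y : Ihat s, xStar s < y.1 (l + 2) ∧ y ∈ S := by
    obtain ⟨z, hz⟩ := exists_coord_eq hs1.le hs2 (l + 2) (⟨zero_le_one, le_rfl⟩ : (1 : ℝ) ∈ I)
    exact hD.inter_open_nonempty _ (isOpen_lt continuous_const hπ)
      ⟨z, show xStar s < z.1 (l + 2) by rw [hz]; exact xStar_lt_one hs1⟩
  obtain ⟨p, hp⟩ := hS.joinedIn x hxS y hyS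
  have hF := p.continuous_extend
  obtain ⟨t₀, t₁, -, ht, -, h₀, h₁, hIcc, hIoo⟩ :=
    (hπ.comp hF).continuousOn.exists_Icc_crossing zero_le_one (by simpa using hx.le)
      (c_lt_xStar hs0) (by simpa using hy.le)
  have hk : MapsTo (fun t => (p.extend t).1 (l + 2)) (Ioo t₀ t₁)
      (uIoo ((p.extend t₀).1 (l + 2)) ((p.extend t₁).1 (l + 2))) := by
    simp only [Function.comp_apply] at h₀ h₁
    rw [h₀, h₁, uIoo_of_lt (c_lt_xStar hs0)]
    exact hIoo
  have hbij : BijOn (fun z : Ihat s => z.1 (l + 2)) (p.extend '' Icc t₀ t₁)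
      (Icc (c s) (xStar s)) := by
    have himage : (fun t => (p.extend t).1 (l + 2)) '' Icc t₀ t₁ = Icc (c s) (xStar s) :=
      hIcc.image_subset.antisymm (h₀ ▸ h₁ ▸ intermediate_value_Icc ht.le (hπ.comp hF).continuousOn)
    simpa only [image_image, himage] using (injOn_coord_image_Icc hs0 hF hk).bijOn_image
  have hcoord : (fun z : Ihat s => z.1 l) = (f s)^[2] ∘ fun z => z.1 (l + 2) :=
    funext fun z => coord_eq_iterate z l 2
  refine ⟨p.extend '' Icc t₀ t₁, ?_, mflatOver_of_bijOn (isCompact_Icc.image hF)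
    (hcoord ▸ (bijOn_f_iterate_two hs0).comp hbij) subset_rfl ordConnected_Icc
    ⟨0, ⟨le_rfl, zero_le_one⟩, 1, ⟨zero_le_one, le_rfl⟩, zero_ne_one⟩⟩
  rintro _ ⟨t, -, rfl⟩
  obtain ⟨u, hu⟩ : p.extend t ∈ range p := p.extend_range ▸ mem_range_self t
  exact hu ▸ hp u

/-- a path-connected `S ⊆ Î` is dense iff for every `ℓ ≥ 0` there is a
flat closed arc `γ ⊆ S` with `π_ℓ(γ) = I`; moreover a dense such `S` is metrically
infinite. -/
theorem dense_iff_full_flat_arcs (s : ℝ) (hs₁ : Real.sqrt 2 < s) (hs₂ : s < 2)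
    (S : Set (Ihat s)) (hS : IsPathConnected S) :
    (Dense S ↔ ∀ ℓ : ℕ, ∃ γ : Set (Ihat s), γ ⊆ S ∧ IsFlatClosedArc s γ ∧
      (fun x : Ihat s => x.1 ℓ) '' γ = I) ∧
    (Dense S → MetricallyInfinite s S) := by
  have hs : 1 < s := Real.one_lt_sqrt_two.trans hs₁
  have flat_arcs (hD : Dense S) (l : ℕ) := exists_mflatOver_I hs hs₂.le hD hS l
  refine ⟨⟨fun hD l => ?_, fun h => dense_of_forall_I_subset_image_coord fun n => ?_⟩,
    fun hD N _ => ?_⟩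
  · obtain ⟨γ, hγS, hγ⟩ := flat_arcs hD l
    exact ⟨γ, hγS, hγ.isFlatClosedArc, hγ.image_coord⟩
  · obtain ⟨γ, hγS, -, hγ⟩ := h n
    exact hγ ▸ image_mono hγS
  · obtain ⟨l, hl⟩ := pow_unbounded_of_one_lt N hs
    obtain ⟨γ, hγS, hγ⟩ := flat_arcs hD l
    refine ⟨γ, hγS, hγ.isFlatClosedArc, ?_⟩
    calc ENNReal.ofReal N < ENNReal.ofReal (s ^ l) :=
          (ENNReal.ofReal_lt_ofReal_iff (by positivity)).2 hl
      _ = eVariationOn (f s)^[l] I := by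
          rw [I, eVariationOn_iterate_f (by linarith) hs₂.le l le_rfl zero_le_one le_rfl,
            sub_zero, mul_one]
      _ ≤ arcLength s γ := eVariationOn_iterate_le_arcLength hγ

end Tent
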